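/- arXiv:math/0410252 — 3 statements merged into one kernel-verified Lean document; each statement's English description precedes it below -/
import Mathlib

section
/- Let n, k, r, l be integers with n ≥ 5, k ≥ 2, n ≥ k and 2 ≤ r ≤ l, and let c_r, c_{r+1}, …, c_l be nonnegative integers with c_r ≥ 1 such that 5·∑_{i=r}^{l} i·c_i < n − 1, and set d = 2n + k − 6 − 5·∑_{i=r}^{l} (i−1)·c_i. Then every nonnegative integer m satisfying 5m < (n+k−2)·(n − 1 − 5·∑_{i=r}^{l} i·c_i) also satisfies 6m ≤ d² + 9d + 10. -/
theorem stmt_13 (n k r l : ℤ) (hn : 5 ≤ n) (hk : 2 ≤ k) (hkn : k ≤ n)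
    (hr : 2 ≤ r) (hrl : r ≤ l) (c : ℤ → ℤ)
    (hc : ∀ i ∈ Finset.Icc r l, 0 ≤ c i) (hcr : 1 ≤ c r)
    (hsum : 5 * ∑ i ∈ Finset.Icc r l, i * c i < n - 1)
    (d : ℤ) (hd : d = 2 * n + k - 6 - 5 * ∑ i ∈ Finset.Icc r l, (i - 1) * c i) :
    ∀ m : ℤ, 0 ≤ m →
      5 * m < (n + k - 2) * (n - 1 - 5 * ∑ i ∈ Finset.Icc r l, i * c i) →
      6 * m ≤ d ^ 2 + 9 * d + 10 := by
  intro m hm hmlt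
  set S := ∑ i ∈ Finset.Icc r l, i * c i with hS
  set T := ∑ i ∈ Finset.Icc r l, (i - 1) * c i with hT
  have hST : S - T = ∑ i ∈ Finset.Icc r l, c i := by
    rw [hS, hT, ← Finset.sum_sub_distrib]
    congr 1; ext i; ring
  have hC : 1 ≤ S - T := by
    rw [hST]
    calc (1:ℤ) ≤ c r := hcr
      _ ≤ ∑ i ∈ Finset.Icc r l, c i :=
        Finset.single_le_sum (fun i hi => hc i hi)
          (Finset.mem_Icc.mpr ⟨le_refl r, hrl⟩)
  have hA : 5 ≤ n + k - 2 := by linarith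
  have hB : 1 ≤ n - 1 - 5 * S := by linarith
  have hdge : n + k - 2 + (n - 1 - 5 * S) + 2 ≤ d := by
    rw [hd]; linarith
  nlinarith [sq_nonneg ((n + k - 2) - (n - 1 - 5 * S)),
    mul_nonneg (by linarith : (0:ℤ) ≤ d - (n + k - 2 + (n - 1 - 5 * S) + 2))
      (by linarith : (0:ℤ) ≤ d + (n + k - 2 + (n - 1 - 5 * S) + 2)),
    mul_pos (by linarith : (0:ℤ) < n + k - 2) (by linarith : (0:ℤ) < n - 1 - 5 * S)]
end

section
/- Let n, k, r, l be integers with n ≥ 5, k ≥ 2, n ≥ k and 2 ≤ r ≤ l, and let c_r, c_{r+1}, …, c_l be nonnegative integers with c_r ≥ 1 such that 5·∑_{i=r}^{l} i·c_i < n − 1, and set d = 2n + k − 6 − 5·∑_{i=r}^{l} (i−1)·c_i. Let Σ ⊂ ℙ²(ℂ) be a finite set such that 5·|Σ| < (n+k−2)·(n − 1 − 5·∑_{i=r}^{l} i·c_i) and such that, for every integer t ≥ 1 and every nonzero homogeneous polynomial C of degree t in ℂ[x_0,x_1,x_2], at most t(n+k−2) points of Σ lie on the plane curve {C = 0}. Then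 for every integer t with 1 ≤ 2t ≤ d + 3 and every nonzero homogeneous polynomial C of degree t in ℂ[x_0,x_1,x_2], at most t(d+3−t) − 2 points of Σ lie on the plane curve {C = 0}. -/
open MvPolynomial

noncomputable section

/-- The projective space `ℙ^N(ℂ)`. -/
abbrev ProjPt (N : ℕ) := Projectivization ℂ (Fin (N + 1) → ℂ)

/-- A (homogeneous) polynomial vanishes at a point of projective space. -/
def VanishesAt {N : ℕ} (F : MvPolynomial (Fin (N + 1)) ℂ) (p : ProjPt N) : Prop :=
  eval p.rep F = 0

theorem stmt_14 (n k r l : ℤ) (hn : 5 ≤ n) (hk : 2 ≤ k) (hkn : k ≤ n)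
    (hr : 2 ≤ r) (hrl : r ≤ l) (c : ℤ → ℤ)
    (hc : ∀ i ∈ Finset.Icc r l, 0 ≤ c i) (hcr : 1 ≤ c r)
    (hsum : 5 * ∑ i ∈ Finset.Icc r l, i * c i < n - 1)
    (d : ℤ) (hd : d = 2 * n + k - 6 - 5 * ∑ i ∈ Finset.Icc r l, (i - 1) * c i)
    (S : Set (ProjPt 2)) (hfin : S.Finite)
    (hcard : 5 * (S.ncard : ℤ) < (n + k - 2) * (n - 1 - 5 * ∑ i ∈ Finset.Icc r l, i * c i))
    (hcurve : ∀ t : ℕ, 1 ≤ t →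
      ∀ C : MvPolynomial (Fin 3) ℂ, C ≠ 0 → C.IsHomogeneous t →
        ((S ∩ {p : ProjPt 2 | VanishesAt C p}).ncard : ℤ) ≤ (t : ℤ) * (n + k - 2)) :
    ∀ t : ℕ, 1 ≤ t → 2 * (t : ℤ) ≤ d + 3 →
      ∀ C : MvPolynomial (Fin 3) ℂ, C ≠ 0 → C.IsHomogeneous t →
        ((S ∩ {p : ProjPt 2 | VanishesAt C p}).ncard : ℤ)
          ≤ (t : ℤ) * (d + 3 - (t : ℤ)) - 2 := by

  intro t ht ht2 C hC hhom
  set s1 := ∑ i ∈ Finset.Icc r l, i * c i with hs1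
  set s2 := ∑ i ∈ Finset.Icc r l, (i - 1) * c i with hs2
  have hsc : s1 - s2 = ∑ i ∈ Finset.Icc r l, c i := by
    rw [hs1, hs2, ← Finset.sum_sub_distrib]
    exact Finset.sum_congr rfl (fun i _ => by ring)
  have hsc1 : 1 ≤ s1 - s2 := by
    rw [hsc]
    calc (1 : ℤ) ≤ c r := hcr
      _ ≤ _ := Finset.single_le_sum (fun i hi => hc i hi)
          (Finset.mem_Icc.mpr ⟨le_refl r, hrl⟩)
  have hs2nn : 0 ≤ s2 := by
    apply Finset.sum_nonneg
    intro i hi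
    have hi' := Finset.mem_Icc.mp hi
    have := hc i hi
    nlinarith
  have hB : 1 ≤ n - 1 - 5 * s1 := by omega
  have htS : ((S ∩ {p : ProjPt 2 | VanishesAt C p}).ncard : ℤ) ≤ (S.ncard : ℤ) :=
    Nat.cast_le.mpr (Set.ncard_le_ncard Set.inter_subset_left hfin)
  have hbound := hcurve t ht C hC hhom
  have ht1 : (1 : ℤ) ≤ (t : ℤ) := by exact_mod_cast ht
  set A := n - 1 - 5 * s2 with hAdef
  have hA6 : 6 ≤ A := by omega
  have hdA : d + 3 - A = n + k - 2 := by omega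
  rcases le_or_gt (t : ℤ) (A - 1) with hcase | hcase
  · -- use hcurve bound
    have h1 : 0 ≤ ((t : ℤ) - 1) * ((A - 1) - t) := by
      apply mul_nonneg <;> omega
    nlinarith [hbound, htS]
  · -- use hcard bound
    have htA : A ≤ (t : ℤ) := by omega
    have htA2 : A ≤ d + 3 - t := by omega
    have h1 : 0 ≤ ((t : ℤ) - A) * ((d + 3 - t) - A) := by
      apply mul_nonneg <;> omega
    have h2 : A * (d + 3 - A) ≤ (t : ℤ) * (d + 3 - t) := by nlinarith
    have h3 : 5 * (S.ncard : ℤ) ≤ (n + k - 2) * (n - 1 - 5 * s1) - 1 := by omega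
    have hnk : (5 : ℤ) ≤ n + k - 2 := by omega
    nlinarith [htS, h2, h3, mul_le_mul_of_nonneg_left (show n - 1 - 5 * s1 + 5 ≤ A by omega) (show (0:ℤ) ≤ n + k - 2 by omega)]
end
end

section
/- Let n, r, κ, l be integers with r ≥ 3, n ≥ 2, 2r ≥ n and 2 ≤ κ ≤ l, and let c_κ, c_{κ+1}, …, c_l be nonnegative integers with c_κ ≥ 1 such that 4·∑_{i=κ}^{l} i·c_i < r, and set d = 3r + n − 5 − 4·∑_{i=κ}^{l} (i−1)·c_i. Let Σ ⊂ ℙ²(ℂ) be a finite set such that 4·|Σ| < (2r+n−2)·(r − 4·∑_{i=κ}^{l} i·c_i) and such that, for every integer t ≥ 1 and every nonzero homogeneous polynomial C of degree t in ℂ[x_0,x_1,x_2], at most t(2r+n−2) points of Σ lie on the plane curve {C = 0}. Then for every integer t with 1 ≤ 2t ≤ d + 3 and every nonzero homogeneous polynomial C of degree t in ℂ[x_0,x_1,x_2], at most t(d+3−t) − 2 points of Σ lie on the plane curve {C = 0}. -/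
open MvPolynomial

noncomputable section

theorem stmt_17 (n r κ l : ℤ) (hr : 3 ≤ r) (hn : 2 ≤ n) (hrn : n ≤ 2 * r)
    (hκ : 2 ≤ κ) (hκl : κ ≤ l) (c : ℤ → ℤ)
    (hc : ∀ i ∈ Finset.Icc κ l, 0 ≤ c i) (hcκ : 1 ≤ c κ)
    (hsum : 4 * ∑ i ∈ Finset.Icc κ l, i * c i < r)
    (d : ℤ) (hd : d = 3 * r + n - 5 - 4 * ∑ i ∈ Finset.Icc κ l, (i - 1) * c i)
    (S : Set (ProjPt 2)) (hfin : S.Finite)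
    (hcard : 4 * (S.ncard : ℤ) < (2 * r + n - 2) * (r - 4 * ∑ i ∈ Finset.Icc κ l, i * c i))
    (hcurve : ∀ t : ℕ, 1 ≤ t →
      ∀ C : MvPolynomial (Fin 3) ℂ, C ≠ 0 → C.IsHomogeneous t →
        ((S ∩ {p : ProjPt 2 | VanishesAt C p}).ncard : ℤ) ≤ (t : ℤ) * (2 * r + n - 2)) :
    ∀ t : ℕ, 1 ≤ t → 2 * (t : ℤ) ≤ d + 3 →
      ∀ C : MvPolynomial (Fin 3) ℂ, C ≠ 0 → C.IsHomogeneous t →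
        ((S ∩ {p : ProjPt 2 | VanishesAt C p}).ncard : ℤ)
          ≤ (t : ℤ) * (d + 3 - (t : ℤ)) - 2 := by
  set A := ∑ i ∈ Finset.Icc κ l, i * c i with hA
  set B := ∑ i ∈ Finset.Icc κ l, (i - 1) * c i with hB
  have hB0 : 0 ≤ B := Finset.sum_nonneg fun i hi => by
    have := hc i hi
    have hi2 : 2 ≤ i := le_trans hκ (Finset.mem_Icc.mp hi).1
    nlinarith
  have hAB : B + 1 ≤ A := by
    have h1 : A - B = ∑ i ∈ Finset.Icc κ l, c i := by
      rw [hA, hB, ← Finset.sum_sub_distrib]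
      congr 1; ext i; ring
    have h2 : c κ ≤ ∑ i ∈ Finset.Icc κ l, c i :=
      Finset.single_le_sum (fun i hi => hc i hi)
        (Finset.mem_Icc.mpr ⟨le_refl κ, hκl⟩)
    linarith
  have hm : 4 * B + 5 ≤ r := by linarith
  intro t ht h2t C hC hhom
  by_cases htm : (t : ℤ) ≤ r - 4 * B - 1
  · have h1 := hcurve t ht C hC hhom
    have ht1 : (1 : ℤ) ≤ (t : ℤ) := by exact_mod_cast ht
    nlinarith [mul_nonneg (by linarith : (0:ℤ) ≤ (t:ℤ) - 1)
      (by linarith : (0:ℤ) ≤ r - 4 * B - 1 - (t:ℤ))]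
  · push_neg at htm
    have hsub : ((S ∩ {p : ProjPt 2 | VanishesAt C p}).ncard : ℤ) ≤ (S.ncard : ℤ) := by
      exact_mod_cast Set.ncard_le_ncard Set.inter_subset_left hfin
    have htm' : r - 4 * B ≤ (t : ℤ) := by linarith
    have hd3 : (t : ℤ) ≤ d + 3 - (t : ℤ) := by linarith
    nlinarith [mul_nonneg (by linarith : (0:ℤ) ≤ (t:ℤ) - (r - 4 * B))
      (by linarith : (0:ℤ) ≤ (d + 3 - (t:ℤ)) - (r - 4 * B)),
      mul_nonneg (by linarith : (0:ℤ) ≤ 2*r + n - 2) (by linarith : (0:ℤ) ≤ r - 4*B)]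
end
end
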